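/- For every integer n ≥ 0 there exists a polynomial P_n in three variables with nonnegative integer coefficients such that, in K, σ(μ^{(1)}_n) · ∏_{k=1}^{n+1} [ν+k]_q^{⌊(n+1)/k⌋} = Q^n · [ν+1]_q · P_n(q, Q, [ν]_q), and this P_n is the same as the numerator polynomial in the base-q expansion, i.e. one also has μ^{(1)}_n · ∏_{k=1}^{n+1} [ν+k]_q^{⌊(n+1)/k⌋} = (Qq)^n · [ν+1]_q · P_n(q, Q, [ν]_q). Equivalently (Theorem 3.4): J^{(1)}_{ν+1}((1−q)z;q^{−1})/J^{(1)}_ν((1−q)z;q^{−1}) = −∑_{n≥1} (N^{(1)}_{n,ν}(q)/D_{n,ν}(q)) q^{νn−1} (z/2)^{2n−1}, with the same N^{(1)}_{n,ν}(q), D_{n,ν}(q) = ∏_{k=1}^{n}[k+ν]_q^{⌊n/k⌋} as in the base-q expansion, and N^{(1)}_{n,ν}(q) has nonnegative integer coefficients as a polynomial in q, q^ν and [ν]_q. -/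

import Mathlib

/- Let `K` be the fraction field of `ℚ[q,Q]`, where `Q` plays the role of `q^ν`.
`θ1ν` and `θ1ν1` are the series `θ^{(1)}_ν` and `θ^{(1)}_{ν+1}` of Jackson's
`q`-Bessel function `J^{(1)}_ν`, and `μ1 n` are the coefficients of
`θ^{(1)}_{ν+1}/θ^{(1)}_ν`. -/

noncomputable section

abbrev K : Type := FractionRing (MvPolynomial (Fin 2) ℚ)

def qv : K := algebraMap (MvPolynomial (Fin 2) ℚ) K (MvPolynomial.X 0)

def Qv : K := algebraMap (MvPolynomial (Fin 2) ℚ) K (MvPolynomial.X 1)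

/-- The q-Pochhammer symbol `(a;q)_n`. -/
def qPoch (a : K) (n : ℕ) : K := ∏ j ∈ Finset.range n, (1 - a * qv ^ j)

/-- `[ν+k]_q = (1 - Q q^k)/(1-q)`. -/
def brk (k : ℕ) : K := (1 - Qv * qv ^ k) / (1 - qv)

/-- `[ν]_q = (1 - Q)/(1-q)`. -/
def brNu : K := (1 - Qv) / (1 - qv)

/-- `θ^{(1)}_ν(x)`. -/
def θ1ν : PowerSeries K :=
  PowerSeries.mk fun n =>
    (-1) ^ n * (1 - qv) ^ (2 * n) / (qPoch qv n * qPoch (Qv * qv) n)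

/-- `θ^{(1)}_{ν+1}(x)`. -/
def θ1ν1 : PowerSeries K :=
  PowerSeries.mk fun n =>
    (-1) ^ n * (1 - qv) ^ (2 * n) / (qPoch qv n * qPoch (Qv * qv ^ 2) n)

/-- The coefficients `μ^{(1)}_n` of `θ^{(1)}_{ν+1}(x)/θ^{(1)}_ν(x)`. -/
def μ1 (n : ℕ) : K := PowerSeries.coeff n (θ1ν1 * θ1ν⁻¹)

/-! `F = θ^{(1)}_{ν+1}/θ^{(1)}_ν` satisfies the `q`-Riccati equation
`(1 - Qq)(F(x) - Qq F(qx)) - Qq(1-q)² x F(x) F(qx) = (1 - Qq)²`, a consequence of the two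
contiguity relations between `θ^{(1)}_ν` and `θ^{(1)}_{ν+1}`. Its coefficients give
`[ν+1][ν+n+2] μ_{n+1} = Qq ∑_{i+j=n} q^j μ_i μ_j`. Since
`⌊(i+1)/k⌋ + ⌊(j+1)/k⌋ ≤ ⌊(n+2)/k⌋`, the product `D_{i+1} D_{j+1} [ν+n+2]` divides `D_{n+2}`
with a cofactor that is a product of brackets `[ν+k] = [ν] + Q(1 + q + ⋯ + q^{k-1})`, so induction
produces numerators with coefficients in `ℕ`.

For base `q⁻¹`: `σ[ν+k+1] = [ν+k+1]/(Q q^k)` and the convolution is palindromic, so `q^n σ(μ_n)`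
satisfies the same recursion as `μ_n`, hence equals it. -/

open Finset

section QRiccati

variable {R : Type*}

def qConv [CommSemiring R] (q : R) (μ : ℕ → R) (n : ℕ) : R :=
  ∑ p ∈ antidiagonal n, μ p.1 * (q ^ p.2 * μ p.2)

def kishoreDenom [CommMonoid R] (b : ℕ → R) (n : ℕ) : R :=
  ∏ k ∈ Icc 1 n, b k ^ (n / k)

lemma div_add_div_add_ite_le {i j k : ℕ} (hk : 1 ≤ k) (hk' : k ≤ i + j + 2) :
    (i + 1) / k + (j + 1) / k + (if k = i + j + 2 then 1 else 0) ≤ (i + j + 2) / k := by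
  rcases eq_or_ne k (i + j + 2) with rfl | hne
  · rw [Nat.div_eq_of_lt (by omega), Nat.div_eq_of_lt (by omega), Nat.div_self (by omega)]
    simp
  · rw [if_neg hne, add_zero, show i + j + 2 = (i + 1) + (j + 1) by omega]
    exact Nat.div_add_div_le_add_div

lemma kishoreDenom_eq_prod_Icc [CommMonoid R] (b : ℕ → R) {n N : ℕ} (h : n ≤ N) :
    kishoreDenom b n = ∏ k ∈ Icc 1 N, b k ^ (n / k) := by
  refine prod_subset (Icc_subset_Icc_right h) fun k hk hkn => ?_
  rw [Nat.div_eq_of_lt (by simp only [mem_Icc] at hk hkn; omega), pow_zero]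

lemma exists_kishoreDenom_eq_mul [CommSemiring R] (S : Subsemiring R) {b : ℕ → R}
    (hb : ∀ k, b k ∈ S) (i j : ℕ) :
    ∃ e ∈ S, kishoreDenom b (i + j + 2)
      = b (i + j + 2) * kishoreDenom b (i + 1) * kishoreDenom b (j + 1) * e := by
  refine ⟨∏ k ∈ Icc 1 (i + j + 2), b k ^ ((i + j + 2) / k
      - ((i + 1) / k + (j + 1) / k + if k = i + j + 2 then 1 else 0)),
    prod_mem fun k _ => pow_mem (hb k) _, ?_⟩
  have hbN : b (i + j + 2) = ∏ k ∈ Icc 1 (i + j + 2), b k ^ (if k = i + j + 2 then 1 else 0) := by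
    simp [pow_ite, prod_ite_eq']
  rw [hbN, kishoreDenom_eq_prod_Icc b (show i + 1 ≤ i + j + 2 by omega),
    kishoreDenom_eq_prod_Icc b (show j + 1 ≤ i + j + 2 by omega), kishoreDenom, ← prod_mul_distrib,
    ← prod_mul_distrib, ← prod_mul_distrib]
  refine prod_congr rfl fun k hk => ?_
  have := div_add_div_add_ite_le (mem_Icc.1 hk).1 (mem_Icc.1 hk).2
  rw [← pow_add, ← pow_add, ← pow_add]
  congr 1
  omega

open PowerSeries in
lemma PowerSeries.coeff_mul_rescale_self [CommSemiring R] (q : R) (F : PowerSeries R) (n : ℕ) :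
    coeff n (F * rescale q F) = qConv q (fun i => coeff i F) n := by
  simp only [coeff_mul, coeff_rescale, qConv]

lemma qConv_map [CommRing R] (σ : R →+* R) {q : R} (hq : q * σ q = 1) (μ : ℕ → R) (n : ℕ) :
    q ^ (2 * n) * σ (qConv q μ n) = qConv q (fun i => q ^ i * σ (μ i)) n := by
  rw [qConv, qConv, map_sum, mul_sum]
  conv_rhs => rw [← Nat.sum_antidiagonal_swap]
  refine sum_congr rfl fun x hx => ?_
  obtain ⟨i, j⟩ := x
  obtain rfl : i + j = n := mem_antidiagonal.1 hx
  have hqj : (q * σ q) ^ j = 1 := by rw [hq, one_pow]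
  simp only [map_mul, map_pow, Prod.swap]
  linear_combination (q ^ (2 * i + j) * σ (μ i) * σ (μ j)) * hqj

variable [CommRing R] [IsDomain R] {q c : R} {b μ : ℕ → R}

theorem eq_of_qRiccati_rec {ν : ℕ → R} (hb : ∀ n, b 1 * b (n + 2) ≠ 0) (h0 : μ 0 = ν 0)
    (hμ : ∀ n, b 1 * b (n + 2) * μ (n + 1) = c * qConv q μ n)
    (hν : ∀ n, b 1 * b (n + 2) * ν (n + 1) = c * qConv q ν n) : μ = ν := by
  funext n
  induction n using Nat.strong_induction_on with
  | _ n ih =>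
    rcases n with _ | n
    · exact h0
    refine mul_left_cancel₀ (hb n) ?_
    rw [hμ, hν]
    refine congrArg _ (sum_congr rfl fun p hp => ?_)
    have := mem_antidiagonal.1 hp
    rw [ih p.1 (by omega), ih p.2 (by omega)]

theorem exists_mul_kishoreDenom_eq_of_qRiccati_rec (S : Subsemiring R) (hq : q ∈ S)
    (hbS : ∀ k, b k ∈ S) (hb : ∀ n, b 1 * b (n + 2) ≠ 0) (h0 : μ 0 = 1)
    (hrec : ∀ n, b 1 * b (n + 2) * μ (n + 1) = c * qConv q μ n) (n : ℕ) :
    ∃ p ∈ S, μ n * kishoreDenom b (n + 1) = c ^ n * b 1 * p := by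
  induction n using Nat.strong_induction_on with
  | _ n ih =>
    rcases n with _ | m
    · exact ⟨1, S.one_mem, by simp [h0, kishoreDenom]⟩
    choose! p hpS hp using ih
    choose e heS he using exists_kishoreDenom_eq_mul S hbS
    have hle : ∀ x ∈ antidiagonal m, x.1 < m + 1 ∧ x.2 < m + 1 := fun x hx => by
      have := mem_antidiagonal.1 hx; omega
    refine ⟨∑ x ∈ antidiagonal m, q ^ x.2 * p x.1 * p x.2 * e x.1 x.2,
      sum_mem fun x hx => mul_mem (mul_mem (mul_mem (pow_mem hq _) (hpS _ (hle x hx).1))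
        (hpS _ (hle x hx).2)) (heS _ _), mul_left_cancel₀ (hb m) ?_⟩
    calc b 1 * b (m + 2) * (μ (m + 1) * kishoreDenom b (m + 1 + 1))
        = c * qConv q μ m * kishoreDenom b (m + 2) := by rw [← hrec]; ring
      _ = ∑ x ∈ antidiagonal m,
            b 1 * b (m + 2) * (c ^ (m + 1) * b 1 * (q ^ x.2 * p x.1 * p x.2 * e x.1 x.2)) := by
        rw [qConv, mul_sum, sum_mul]
        refine sum_congr rfl fun x hx => ?_
        obtain ⟨i, j⟩ := x
        obtain rfl : i + j = m := mem_antidiagonal.1 hx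
        have hi := hp i (by omega)
        have hj := hp j (by omega)
        linear_combination c * μ i * q ^ j * μ j * he i j
          + c * q ^ j * b (i + j + 2) * e i j * μ j * kishoreDenom b (j + 1) * hi
          + c * q ^ j * b (i + j + 2) * e i j * (c ^ i * b 1 * p i) * hj
      _ = b 1 * b (m + 2) * (c ^ (m + 1) * b 1 * _) := by rw [← mul_sum, ← mul_sum]

end QRiccati

section JacksonBessel

open PowerSeries

lemma algebraMap_mvPolynomial_ne_zero {p : MvPolynomial (Fin 2) ℚ} (hp : p ≠ 0) :
    algebraMap (MvPolynomial (Fin 2) ℚ) K p ≠ 0 :=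
  IsFractionRing.to_map_eq_zero_iff.not.2 hp

lemma qv_ne_zero : qv ≠ 0 := algebraMap_mvPolynomial_ne_zero (MvPolynomial.X_ne_zero 0)

lemma Qv_ne_zero : Qv ≠ 0 := algebraMap_mvPolynomial_ne_zero (MvPolynomial.X_ne_zero 1)

lemma one_sub_Qv_pow_mul_qv_pow_ne_zero {a m : ℕ} (h : a + m ≠ 0) :
    (1 : K) - Qv ^ a * qv ^ m ≠ 0 := by
  have hK : (1 : K) - Qv ^ a * qv ^ m = algebraMap (MvPolynomial (Fin 2) ℚ) K
      (1 - MvPolynomial.X 1 ^ a * MvPolynomial.X 0 ^ m) := by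
    simp [qv, Qv]
  rw [hK]
  refine algebraMap_mvPolynomial_ne_zero fun h0 => ?_
  have h2 := congrArg (MvPolynomial.eval fun _ => (2 : ℚ)) h0
  simp only [map_sub, map_one, map_mul, map_pow, MvPolynomial.eval_X, map_zero, ← pow_add] at h2
  exact (one_lt_pow₀ (by norm_num : (1 : ℚ) < 2) h).ne' (sub_eq_zero.1 h2).symm

lemma one_sub_qv_pow_ne_zero {m : ℕ} (h : m ≠ 0) : (1 : K) - qv ^ m ≠ 0 := by
  simpa using one_sub_Qv_pow_mul_qv_pow_ne_zero (a := 0) (m := m) (by omega)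

lemma one_sub_Qv_mul_qv_pow_ne_zero (m : ℕ) : (1 : K) - Qv * qv ^ m ≠ 0 := by
  simpa using one_sub_Qv_pow_mul_qv_pow_ne_zero (a := 1) (m := m) (by omega)

lemma one_sub_qv_ne_zero : (1 : K) - qv ≠ 0 := by
  simpa using one_sub_qv_pow_ne_zero one_ne_zero

lemma brk_ne_zero (k : ℕ) : brk k ≠ 0 :=
  div_ne_zero (one_sub_Qv_mul_qv_pow_ne_zero k) one_sub_qv_ne_zero

lemma brk_eq (k : ℕ) : brk k = brNu + Qv * ∑ t ∈ range k, qv ^ t := by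
  rw [brk, brNu, div_eq_iff one_sub_qv_ne_zero, add_mul, div_mul_cancel₀ _ one_sub_qv_ne_zero,
    mul_assoc, geom_sum_mul_neg]
  ring

lemma qPoch_ne_zero {a : K} (ha : ∀ j, 1 - a * qv ^ j ≠ 0) (n : ℕ) : qPoch a n ≠ 0 :=
  prod_ne_zero_iff.2 fun j _ => ha j

lemma qPoch_succ (a : K) (n : ℕ) : qPoch a (n + 1) = qPoch a n * (1 - a * qv ^ n) :=
  prod_range_succ _ _

lemma qPoch_succ' (a : K) (n : ℕ) : qPoch a (n + 1) = (1 - a) * qPoch (a * qv) n := by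
  simp only [qPoch, prod_range_succ', pow_succ, pow_zero, mul_one, mul_assoc, mul_comm]

lemma coeff_θ1ν (n : ℕ) :
    coeff n θ1ν = (-1) ^ n * (1 - qv) ^ (2 * n) / (qPoch qv n * qPoch (Qv * qv) n) :=
  coeff_mk _ _

lemma coeff_θ1ν1 (n : ℕ) :
    coeff n θ1ν1 = (-1) ^ n * (1 - qv) ^ (2 * n) / (qPoch qv n * qPoch (Qv * qv ^ 2) n) :=
  coeff_mk _ _

lemma qPoch_qv_ne_zero (n : ℕ) : qPoch qv n ≠ 0 :=
  qPoch_ne_zero (fun j => by simpa [pow_succ'] using one_sub_qv_pow_ne_zero (j.succ_ne_zero)) n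

lemma qPoch_Qv_mul_qv_pow_ne_zero (s n : ℕ) : qPoch (Qv * qv ^ s) n ≠ 0 :=
  qPoch_ne_zero (fun j => by
    simpa [mul_assoc, pow_add] using one_sub_Qv_mul_qv_pow_ne_zero (s + j)) n

lemma coeff_θ1ν1_mul (n : ℕ) :
    coeff n θ1ν1 * (1 - Qv * qv ^ (n + 1)) = (1 - Qv * qv) * coeff n θ1ν := by
  have key : (1 - Qv * qv) * qPoch (Qv * qv ^ 2) n
      = qPoch (Qv * qv) n * (1 - Qv * qv ^ (n + 1)) := by
    rw [sq, ← mul_assoc, ← qPoch_succ', qPoch_succ, mul_assoc, ← pow_succ']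
  have hR := qPoch_Qv_mul_qv_pow_ne_zero 1 n
  rw [pow_one] at hR
  rw [coeff_θ1ν, coeff_θ1ν1, div_mul_eq_mul_div, mul_div_assoc',
    div_eq_div_iff (mul_ne_zero (qPoch_qv_ne_zero n) (qPoch_Qv_mul_qv_pow_ne_zero 2 n))
      (mul_ne_zero (qPoch_qv_ne_zero n) hR)]
  linear_combination (-((-1) ^ n * (1 - qv) ^ (2 * n) * qPoch qv n)) * key

lemma coeff_θ1ν_succ_mul (n : ℕ) :
    coeff (n + 1) θ1ν * (1 - qv ^ (n + 1)) * (1 - Qv * qv) = -(1 - qv) ^ 2 * coeff n θ1ν1 := by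
  have hP := qPoch_qv_ne_zero n
  have hR := qPoch_Qv_mul_qv_pow_ne_zero 2 n
  have hq : 1 - qv * qv ^ n ≠ 0 := by
    rw [← pow_succ']
    exact one_sub_qv_pow_ne_zero n.succ_ne_zero
  have hQ := one_sub_Qv_mul_qv_pow_ne_zero 1
  rw [pow_one] at hQ
  rw [coeff_θ1ν, coeff_θ1ν1, qPoch_succ, qPoch_succ' (Qv * qv), mul_assoc Qv qv qv, ← sq,
    div_mul_eq_mul_div, div_mul_eq_mul_div, mul_div_assoc',
    div_eq_div_iff (mul_ne_zero (mul_ne_zero hP hq) (mul_ne_zero hQ hR)) (mul_ne_zero hP hR)]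
  ring

lemma θ1ν_sub_rescale :
    C (1 - Qv * qv) * (θ1ν - rescale qv θ1ν) = -(C ((1 - qv) ^ 2) * (X * θ1ν1)) := by
  ext (_ | n)
  · rw [coeff_C_mul, map_sub, coeff_rescale, pow_zero, one_mul, sub_self, mul_zero, map_neg,
      coeff_C_mul, coeff_zero_X_mul, mul_zero, neg_zero]
  · rw [coeff_C_mul, map_neg, coeff_C_mul, coeff_succ_X_mul, map_sub, coeff_rescale]
    linear_combination coeff_θ1ν_succ_mul n

lemma θ1ν1_sub_rescale : θ1ν1 - C (Qv * qv) * rescale qv θ1ν1 = C (1 - Qv * qv) * θ1ν := by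
  ext n
  rw [coeff_C_mul, map_sub, coeff_C_mul, coeff_rescale]
  linear_combination coeff_θ1ν1_mul n

lemma constantCoeff_θ1ν : constantCoeff θ1ν = 1 := by
  simp [← coeff_zero_eq_constantCoeff_apply, coeff_θ1ν, qPoch]

lemma constantCoeff_θ1ν1 : constantCoeff θ1ν1 = 1 := by
  simp [← coeff_zero_eq_constantCoeff_apply, coeff_θ1ν1, qPoch]

lemma θ1ν_ne_zero : θ1ν ≠ 0 := fun h => by
  simpa [h] using constantCoeff_θ1ν

lemma μ1_zero : μ1 0 = 1 := by
  rw [μ1, coeff_zero_eq_constantCoeff_apply, map_mul, constantCoeff_inv, constantCoeff_θ1ν,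
    constantCoeff_θ1ν1, inv_one, mul_one]

lemma ratio_qRiccati :
    C (1 - Qv * qv) * (θ1ν1 * θ1ν⁻¹ - C (Qv * qv) * rescale qv (θ1ν1 * θ1ν⁻¹))
      - C (Qv * qv * (1 - qv) ^ 2) * (X * (θ1ν1 * θ1ν⁻¹ * rescale qv (θ1ν1 * θ1ν⁻¹)))
      = C ((1 - Qv * qv) ^ 2) := by
  set F := θ1ν1 * θ1ν⁻¹
  have hF : F * θ1ν = θ1ν1 := by
    rw [mul_assoc, PowerSeries.inv_mul_cancel _ (by simp [constantCoeff_θ1ν]), mul_one]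
  have hρF : rescale qv F * rescale qv θ1ν = rescale qv θ1ν1 := by rw [← map_mul, hF]
  refine mul_right_cancel₀ θ1ν_ne_zero ?_
  rw [sq (1 - Qv * qv), map_mul C (1 - Qv * qv), map_mul C (Qv * qv)]
  linear_combination C (1 - Qv * qv) * hF
    - C (Qv * qv) * C ((1 - qv) ^ 2) * X * rescale qv F * hF
    - C (Qv * qv) * rescale qv F * θ1ν_sub_rescale
    - C (Qv * qv) * C (1 - Qv * qv) * hρF
    + C (1 - Qv * qv) * θ1ν1_sub_rescale

lemma μ1_succ (n : ℕ) : brk 1 * brk (n + 2) * μ1 (n + 1) = Qv * qv * qConv qv μ1 n := by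
  have h := congrArg (coeff (n + 1)) ratio_qRiccati
  rw [map_sub, coeff_C_mul, coeff_C_mul, coeff_succ_X_mul, coeff_mul_rescale_self, map_sub,
    coeff_C_mul, coeff_rescale, coeff_C, if_neg n.succ_ne_zero] at h
  change (1 - Qv * qv) * (μ1 (n + 1) - Qv * qv * (qv ^ (n + 1) * μ1 (n + 1)))
    - Qv * qv * (1 - qv) ^ 2 * qConv qv μ1 n = 0 at h
  rw [brk, brk, div_mul_div_comm, div_mul_eq_mul_div, div_eq_iff (by simp [one_sub_qv_ne_zero])]
  linear_combination h

lemma exists_μ1_mul_kishoreDenom_eq (n : ℕ) : ∃ P : MvPolynomial (Fin 3) ℕ,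
    μ1 n * kishoreDenom brk (n + 1)
      = (Qv * qv) ^ n * brk 1 * MvPolynomial.aeval ![qv, Qv, brNu] P := by
  let S := (MvPolynomial.aeval (R := ℕ) ![qv, Qv, brNu]).range.toSubsemiring
  have hq : qv ∈ S := ⟨MvPolynomial.X 0, by simp⟩
  have hQ : Qv ∈ S := ⟨MvPolynomial.X 1, by simp⟩
  have hν : brNu ∈ S := ⟨MvPolynomial.X 2, by simp⟩
  have hbrk (k : ℕ) : brk k ∈ S := by
    rw [brk_eq]
    exact add_mem hν (mul_mem hQ (sum_mem fun t _ => pow_mem hq t))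
  obtain ⟨_, ⟨P, rfl⟩, hP⟩ := exists_mul_kishoreDenom_eq_of_qRiccati_rec S hq hbrk
    (fun n => mul_ne_zero (brk_ne_zero 1) (brk_ne_zero (n + 2))) μ1_zero μ1_succ n
  exact ⟨P, hP⟩

end JacksonBessel

lemma Qv_mul_qv_pow_mul_map_brk (σ : K ≃+* K) (hq : σ qv = qv⁻¹) (hQ : σ Qv = Qv⁻¹) (m : ℕ) :
    Qv * qv ^ m * σ (brk (m + 1)) = brk (m + 1) := by
  have hq1 : (1 : K) - qv⁻¹ ≠ 0 := by
    rw [sub_ne_zero, ne_comm, inv_ne_one]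
    exact (sub_ne_zero.1 one_sub_qv_ne_zero).symm
  rw [brk, map_div₀, map_sub, map_sub, map_one, map_mul, map_pow, hq, hQ, inv_pow,
    ← mul_div_assoc, div_eq_div_iff hq1 one_sub_qv_ne_zero]
  field_simp [qv_ne_zero, Qv_ne_zero]
  ring

lemma qv_pow_mul_map_μ1 (σ : K ≃+* K) (hq : σ qv = qv⁻¹) (hQ : σ Qv = Qv⁻¹) :
    (fun n => qv ^ n * σ (μ1 n)) = μ1 := by
  refine eq_of_qRiccati_rec (fun n => mul_ne_zero (brk_ne_zero 1) (brk_ne_zero (n + 2)))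
    (by simp [μ1_zero]) (fun n => ?_) μ1_succ
  have hs := congrArg σ (μ1_succ n)
  simp only [map_mul, hq, hQ] at hs
  have hc := qConv_map (σ : K →+* K) (q := qv) (by simp [hq, qv_ne_zero]) μ1 n
  simp only [RingHom.coe_coe] at hc
  rw [← hc, ← Qv_mul_qv_pow_mul_map_brk σ hq hQ 0, ← Qv_mul_qv_pow_mul_map_brk σ hq hQ (n + 1)]
  have hqq : qv * qv⁻¹ = 1 := mul_inv_cancel₀ qv_ne_zero
  have hQQ : Qv * Qv⁻¹ = 1 := mul_inv_cancel₀ Qv_ne_zero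
  linear_combination Qv ^ 2 * qv ^ (2 * n + 2) * hs
    + Qv * qv ^ (2 * n + 1) * σ (qConv qv μ1 n) * qv * qv⁻¹ * hQQ
    + Qv * qv ^ (2 * n + 1) * σ (qConv qv μ1 n) * hqq

/-- Theorem 3.4, the `q`-Kishore theorem for Jackson's `q`-Bessel functions with base
`q⁻¹`: the same numerator polynomial `P_n` (with nonnegative integer coefficients)
serves for both `σ(μ^{(1)}_n)` (base `q⁻¹`) and `μ^{(1)}_n` (base `q`), where `σ` is the
field automorphism of `K` with `σ(q) = q⁻¹`, `σ(Q) = Q⁻¹`. -/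
theorem q_kishore_jackson_base_q_inv (σ : K ≃+* K) (hq : σ qv = qv⁻¹) (hQ : σ Qv = Qv⁻¹) :
    ∀ n : ℕ, ∃ P : MvPolynomial (Fin 3) ℕ,
      σ (μ1 n) * ∏ k ∈ Finset.Icc 1 (n + 1), brk k ^ ((n + 1) / k)
          = Qv ^ n * brk 1 * MvPolynomial.aeval ![qv, Qv, brNu] P ∧
      μ1 n * ∏ k ∈ Finset.Icc 1 (n + 1), brk k ^ ((n + 1) / k)
          = (Qv * qv) ^ n * brk 1 * MvPolynomial.aeval ![qv, Qv, brNu] P := by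
  intro n
  obtain ⟨P, hP⟩ := exists_μ1_mul_kishoreDenom_eq n
  refine ⟨P, mul_left_cancel₀ (pow_ne_zero n qv_ne_zero) ?_, hP⟩
  have hσ := congrFun (qv_pow_mul_map_μ1 σ hq hQ) n
  change qv ^ n * (σ (μ1 n) * kishoreDenom brk (n + 1)) = _
  linear_combination kishoreDenom brk (n + 1) * hσ + hP

end
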